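/- Assume the block setup and the nested QR setup. Let A𝕂_j(A,F₀) := {A x : x ∈ 𝕂_j(A,F₀)} (a subspace of dimension jL). Let U ∈ ℂ^{n×L} have orthonormal columns spanning the column space of F₀, and let M ∈ ℂ^{n×jL} have orthonormal columns spanning A𝕂_j(A,F₀). Let σ₁,…,σ_L be the singular values of Uᴴ M (the cosines of the principal angles between the two subspaces). Then the multiset {√(1−σ_i²) : i = 1,…,L} of sines of these principal angles equals the multiset of singular values of the product Q_j^{(21)} Q_{j−1}^{(21)} ⋯ Q_1^{(21)}. -/

import Mathlib

open Matrix

noncomputable section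

set_option maxHeartbeats 1000000

/-- Squared Frobenius norm of a complex matrix. -/
def frobSq {a b : Type*} [Fintype a] [Fintype b] (M : Matrix a b ℂ) : ℝ :=
  ∑ r, ∑ c, Complex.normSq (M r c)

/-- The four Moore–Penrose conditions. -/
def IsMoorePenrose {a b : Type*} [Fintype a] [Fintype b]
    (M : Matrix a b ℂ) (P : Matrix b a ℂ) : Prop :=
  M * P * M = M ∧ P * M * P = P ∧ (M * P)ᴴ = M * P ∧ (P * M)ᴴ = P * M

/-- The block Krylov subspace `𝕂_i(A, F)`: the span of all columns of
`F, A F, …, A^(i-1) F`. -/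
def blockKrylov {n L : ℕ} (A : Matrix (Fin n) (Fin n) ℂ)
    (F : Matrix (Fin n) (Fin L) ℂ) (i : ℕ) : Submodule ℂ (Fin n → ℂ) :=
  Submodule.span ℂ { v | ∃ k < i, ∃ c : Fin L, v = fun r => (A ^ k * F) r c }

/-- `E_L^{[mL]}` : the first `L` columns of the `mL × mL` identity matrix
(block row indexing). -/
def EL (m L : ℕ) : Matrix (Fin m × Fin L) (Fin L) ℂ :=
  Matrix.of fun r c => if (r.1 : ℕ) = 0 ∧ r.2 = c then 1 else 0

/-- An `L × L` matrix is upper triangular. -/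
def utL {L : ℕ} (M : Matrix (Fin L) (Fin L) ℂ) : Prop :=
  ∀ a b : Fin L, (b : ℕ) < (a : ℕ) → M a b = 0

/-- A block-indexed `mL × mL` matrix is upper triangular. -/
def utBig {m L : ℕ} (M : Matrix (Fin m × Fin L) (Fin m × Fin L) ℂ) : Prop :=
  ∀ r c : Fin m × Fin L, (c.1 : ℕ) * L + (c.2 : ℕ) < (r.1 : ℕ) * L + (r.2 : ℕ) → M r c = 0

/-- Stack a block-tall matrix on top of an extra block row. -/
def vcat {m L : ℕ} {col : Type*} (T : Matrix (Fin m × Fin L) col ℂ)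
    (Bo : Matrix (Fin L) col ℂ) : Matrix (Fin (m+1) × Fin L) col ℂ :=
  Matrix.of fun r cc => if h : (r.1 : ℕ) < m then T (⟨r.1, h⟩, r.2) cc else Bo r.2 cc

/-- The block matrix `[[R, Z], [0, N]]`. -/
def twoBlock {m L : ℕ} (R : Matrix (Fin m × Fin L) (Fin m × Fin L) ℂ)
    (Z : Matrix (Fin m × Fin L) (Fin L) ℂ) (N : Matrix (Fin L) (Fin L) ℂ) :
    Matrix (Fin (m+1) × Fin L) (Fin (m+1) × Fin L) ℂ :=
  Matrix.of fun r c =>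
    if hr : (r.1 : ℕ) < m then
      if hc : (c.1 : ℕ) < m then R (⟨r.1, hr⟩, r.2) (⟨c.1, hc⟩, c.2)
      else Z (⟨r.1, hr⟩, r.2) c.2
    else
      if (c.1 : ℕ) < m then 0 else N r.2 c.2

/-- The block matrix `[[R, Z], [0, Hmid], [0, Hbot]]`. -/
def threeBlock {m L : ℕ} (R : Matrix (Fin m × Fin L) (Fin m × Fin L) ℂ)
    (Z : Matrix (Fin m × Fin L) (Fin L) ℂ) (Hmid Hbot : Matrix (Fin L) (Fin L) ℂ) :
    Matrix (Fin (m+2) × Fin L) (Fin (m+1) × Fin L) ℂ :=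
  Matrix.of fun r c =>
    if hr : (r.1 : ℕ) < m then
      if hc : (c.1 : ℕ) < m then R (⟨r.1, hr⟩, r.2) (⟨c.1, hc⟩, c.2)
      else Z (⟨r.1, hr⟩, r.2) c.2
    else
      if (c.1 : ℕ) < m then 0
      else if (r.1 : ℕ) = m then Hmid r.2 c.2 else Hbot r.2 c.2

/-- `diag(Q, I_L)` : extend a block-indexed square matrix by an identity block. -/
def extendOne {m L : ℕ} (Q : Matrix (Fin m × Fin L) (Fin m × Fin L) ℂ) :
    Matrix (Fin (m+1) × Fin L) (Fin (m+1) × Fin L) ℂ :=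
  Matrix.of fun r c =>
    if hr : (r.1 : ℕ) < m then
      if hc : (c.1 : ℕ) < m then Q (⟨r.1, hr⟩, r.2) (⟨c.1, hc⟩, c.2) else 0
    else
      if (c.1 : ℕ) < m then 0 else if r.2 = c.2 then 1 else 0

/-- `diag(I_{mL}, Q)` : an identity block, then `Q` in the bottom right corner. -/
def extendBot {m L : ℕ} (Q : Matrix (Fin L) (Fin L) ℂ) :
    Matrix (Fin (m+1) × Fin L) (Fin (m+1) × Fin L) ℂ :=
  Matrix.of fun r c =>
    if (r.1 : ℕ) < m ∨ (c.1 : ℕ) < m then (if r = c then 1 else 0)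
    else Q r.2 c.2

/-- The `(m+2)L × (m+2)L` matrix which is the identity outside of its trailing
principal `2L × 2L` block, which is `[[Q11, Q12], [Q21, Q22]]`. -/
def trailingTwo {m L : ℕ} (Q11 Q12 Q21 Q22 : Matrix (Fin L) (Fin L) ℂ) :
    Matrix (Fin (m+2) × Fin L) (Fin (m+2) × Fin L) ℂ :=
  Matrix.of fun r c =>
    if (r.1 : ℕ) < m ∨ (c.1 : ℕ) < m then (if r = c then 1 else 0)
    else if (r.1 : ℕ) = m then
      (if (c.1 : ℕ) = m then Q11 r.2 c.2 else Q12 r.2 c.2)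
    else
      (if (c.1 : ℕ) = m then Q21 r.2 c.2 else Q22 r.2 c.2)

/-- The block matrix `[R ; 0]` (one extra zero block row below `R`). -/
def stackZero {m L : ℕ} (R : Matrix (Fin m × Fin L) (Fin m × Fin L) ℂ) :
    Matrix (Fin (m+1) × Fin L) (Fin m × Fin L) ℂ :=
  Matrix.of fun r c => if h : (r.1 : ℕ) < m then R (⟨r.1, h⟩, r.2) c else 0

/-- A breakdown-free block Arnoldi decomposition of length `j = p + 1` for the block
linear system `A X = B` with initial guess `X₀` (block size `L`). -/
structure BlockArnoldi (n L p : ℕ) : Type where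
  A : Matrix (Fin n) (Fin n) ℂ
  B : Matrix (Fin n) (Fin L) ℂ
  X0 : Matrix (Fin n) (Fin L) ℂ
  W : Matrix (Fin n) (Fin (p+2) × Fin L) ℂ
  S0 : Matrix (Fin L) (Fin L) ℂ
  Hbar : Matrix (Fin (p+2) × Fin L) (Fin (p+1) × Fin L) ℂ
  hL : 1 ≤ L
  hn : (p+2) * L ≤ n
  F0_rank : (B - A * X0).rank = L
  orth : Wᴴ * W = 1
  S0_ut : utL S0
  S0_inv : IsUnit S0
  F0_eq : B - A * X0 = (W.submatrix id fun c : Fin L => ((0 : Fin (p+2)), c)) * S0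
  span : ∀ i : ℕ, i ≤ p + 2 →
    blockKrylov A (B - A * X0) i =
      Submodule.span ℂ { v | ∃ c : Fin (p+2) × Fin L, (c.1 : ℕ) < i ∧ v = fun r => W r c }
  arnoldi : A * W.submatrix id (Prod.map Fin.castSucc id) = W * Hbar
  hess : ∀ r c, (c.1 : ℕ) + 1 < (r.1 : ℕ) → Hbar r c = 0
  sub_ut : ∀ (k : Fin (p+1)) (a b : Fin L), (b : ℕ) < (a : ℕ) → Hbar (k.succ, a) (k, b) = 0
  sub_inv : ∀ k : Fin (p+1), IsUnit (Matrix.of fun a b : Fin L => Hbar (k.succ, a) (k, b))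

namespace BlockArnoldi

variable {n L p : ℕ}

/-- `H̄_{j-1}`, the leading `jL × (j-1)L` submatrix of `H̄_j`. -/
def Hprev (D : BlockArnoldi n L p) : Matrix (Fin (p+1) × Fin L) (Fin p × Fin L) ℂ :=
  D.Hbar.submatrix (Prod.map Fin.castSucc id) (Prod.map Fin.castSucc id)

/-- `H_j`, the leading `jL × jL` submatrix of `H̄_j`. -/
def Hsq (D : BlockArnoldi n L p) : Matrix (Fin (p+1) × Fin L) (Fin (p+1) × Fin L) ℂ :=
  D.Hbar.submatrix (Prod.map Fin.castSucc id) id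

/-- `W_j = [V₁ … V_j]`. -/
def Wfull (D : BlockArnoldi n L p) : Matrix (Fin n) (Fin (p+1) × Fin L) ℂ :=
  D.W.submatrix id (Prod.map Fin.castSucc id)

/-- `W_{j-1} = [V₁ … V_{j-1}]`. -/
def Wprev (D : BlockArnoldi n L p) : Matrix (Fin n) (Fin p × Fin L) ℂ :=
  D.W.submatrix id (Prod.map (fun i : Fin p => (i.castSucc.castSucc : Fin (p+2))) id)

/-- `V_j`, the `j`-th block Arnoldi vector. -/
def Vj (D : BlockArnoldi n L p) : Matrix (Fin n) (Fin L) ℂ :=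
  D.W.submatrix id fun c : Fin L => (((Fin.last p).castSucc : Fin (p+2)), c)

end BlockArnoldi

/-- `Y` is the unique minimizer of `‖Hb • Y' - T‖_F` over all `Y'`. -/
def IsUniqueFrobMin {a b c : Type*} [Fintype a] [Fintype b] [Fintype c]
    (Hb : Matrix a b ℂ) (T : Matrix a c ℂ) (Y : Matrix b c ℂ) : Prop :=
  (∀ Y', frobSq (Hb * Y - T) ≤ frobSq (Hb * Y' - T)) ∧
  ∀ Y', (∀ Y'', frobSq (Hb * Y' - T) ≤ frobSq (Hb * Y'' - T)) → Y' = Y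

/-- `Y_j^{(G)}` is the solution of the `j`-th block GMRES least-squares subproblem. -/
def IsBlockGMRESj {n L p : ℕ} (D : BlockArnoldi n L p)
    (Y : Matrix (Fin (p+1) × Fin L) (Fin L) ℂ) : Prop :=
  IsUniqueFrobMin D.Hbar (EL (p+2) L * D.S0) Y

/-- `Y_{j-1}^{(G)}` is the solution of the `(j-1)`-st block GMRES least-squares
subproblem. -/
def IsBlockGMRESprev {n L p : ℕ} (D : BlockArnoldi n L p)
    (Y : Matrix (Fin p × Fin L) (Fin L) ℂ) : Prop :=
  IsUniqueFrobMin D.Hprev (EL (p+1) L * D.S0) Y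

/-- The QR setup at step `j = p+1` : a QR factorization `Q̄_{j-1} H̄_{j-1} = [R_{j-1}; 0]`
from the previous step, the induced splitting
`diag(Q̄_{j-1}, I_L)·H̄_j = [[R,Z],[0,Ĥ_{jj}],[0,H_{j+1,j}]]`, the unitary `Q_j`
(identity outside its trailing principal `2L×2L` block) completing the
QR factorization of `H̄_j`, and the unitary `Q̂_j^{(b)}` triangularizing `Ĥ_{jj}`. -/
structure QRSetup (L p : ℕ) (Hbar : Matrix (Fin (p+2) × Fin L) (Fin (p+1) × Fin L) ℂ)
    (S0 : Matrix (Fin L) (Fin L) ℂ) : Type where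
  Qbar : Matrix (Fin (p+1) × Fin L) (Fin (p+1) × Fin L) ℂ
  R : Matrix (Fin p × Fin L) (Fin p × Fin L) ℂ
  Z : Matrix (Fin p × Fin L) (Fin L) ℂ
  Hhat : Matrix (Fin L) (Fin L) ℂ
  Hsub : Matrix (Fin L) (Fin L) ℂ
  Q11 : Matrix (Fin L) (Fin L) ℂ
  Q12 : Matrix (Fin L) (Fin L) ℂ
  Q21 : Matrix (Fin L) (Fin L) ℂ
  Q22 : Matrix (Fin L) (Fin L) ℂ
  N : Matrix (Fin L) (Fin L) ℂ
  Qhatb : Matrix (Fin L) (Fin L) ℂ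
  Nhat : Matrix (Fin L) (Fin L) ℂ
  Qbar_unit : Qbarᴴ * Qbar = 1
  Qbar_base : p = 0 → Qbar = 1
  R_ut : utBig R
  R_inv : IsUnit R
  qr_prev : Qbar * Hbar.submatrix (Prod.map Fin.castSucc id) (Prod.map Fin.castSucc id)
      = stackZero R
  qr_split : extendOne Qbar * Hbar = threeBlock R Z Hhat Hsub
  Qj_unit : (trailingTwo (m := p) Q11 Q12 Q21 Q22)ᴴ * trailingTwo (m := p) Q11 Q12 Q21 Q22 = 1
  qr_full : trailingTwo (m := p) Q11 Q12 Q21 Q22 * (extendOne Qbar * Hbar)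
      = threeBlock R Z N 0
  N_ut : utL N
  N_inv : IsUnit N
  Qhatb_unit : Qhatbᴴ * Qhatb = 1
  Nhat_def : Nhat = Qhatb * Hhat
  Nhat_ut : utL Nhat

namespace QRSetup

variable {L p : ℕ} {Hbar : Matrix (Fin (p+2) × Fin L) (Fin (p+1) × Fin L) ℂ}
  {S0 : Matrix (Fin L) (Fin L) ℂ}

/-- `C̃_j` : the last `L` rows of `Q̄_{j-1} E_L^{[jL]} S₀`. -/
def Ct (S : QRSetup L p Hbar S0) : Matrix (Fin L) (Fin L) ℂ :=
  Matrix.of fun a b => (S.Qbar * (EL (p+1) L * S0)) ((Fin.last p), a) b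

/-- `C_j := Q_j^{(11)} C̃_j`. -/
def C (S : QRSetup L p Hbar S0) : Matrix (Fin L) (Fin L) ℂ := S.Q11 * S.Ct

/-- `Ĉ_j := Q̂_j^{(b)} C̃_j`. -/
def Chat (S : QRSetup L p Hbar S0) : Matrix (Fin L) (Fin L) ℂ := S.Qhatb * S.Ct

end QRSetup

/-- Column space of a matrix: the span of its columns. -/
def colSpace {n : ℕ} {c : Type*} [Fintype c] (M : Matrix (Fin n) c ℂ) :
    Submodule ℂ (Fin n → ℂ) :=
  Submodule.span ℂ (Set.range fun j => fun r => M r j)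

/-- The multiset of singular values of `M` (square roots of the eigenvalues of
`M Mᴴ`, one value for each row index). -/
noncomputable def svalsMultiset {a b : Type*} [Fintype a] [Fintype b] [DecidableEq a]
    (M : Matrix a b ℂ) : Multiset ℝ :=
  (Finset.univ.val : Multiset a).map
    fun i => Real.sqrt ((Matrix.isHermitian_mul_conjTranspose_self M).eigenvalues i)

/-- The nested family of accumulated unitary factors:
`Q̄₀ = I` and `Q̄_i = Q_i · diag(Q̄_{i-1}, I_L)`, where `Q_i` is the identity outside
its trailing `2L × 2L` block `[[Q11 i, Q12 i], [Q21 i, Q22 i]]`. -/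
def QbarFam {L : ℕ} (Q11f Q12f Q21f Q22f : ℕ → Matrix (Fin L) (Fin L) ℂ) :
    (i : ℕ) → Matrix (Fin (i+1) × Fin L) (Fin (i+1) × Fin L) ℂ
  | 0 => 1
  | i+1 => trailingTwo (m := i) (Q11f (i+1)) (Q12f (i+1)) (Q21f (i+1)) (Q22f (i+1)) *
      extendOne (QbarFam Q11f Q12f Q21f Q22f i)

/-- The product `Qf i * Qf (i-1) * ⋯ * Qf 1`. -/
def prodFam {L : ℕ} (Qf : ℕ → Matrix (Fin L) (Fin L) ℂ) : ℕ → Matrix (Fin L) (Fin L) ℂ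
  | 0 => 1
  | i+1 => Qf (i+1) * prodFam Qf i

/-- `H̄_i`, the leading `(i+1)L × iL` submatrix of `H̄_j`. -/
def BlockArnoldi.Hlead {n L p : ℕ} (D : BlockArnoldi n L p) (i : ℕ) (h : i ≤ p + 1) :
    Matrix (Fin (i+1) × Fin L) (Fin i × Fin L) ℂ :=
  D.Hbar.submatrix (Prod.map (Fin.castLE (by omega)) id) (Prod.map (Fin.castLE (by omega)) id)

/-!
Write `Q̄ = Q̄_j`. Since `Q̄ H̄_j = [R̄_j; 0]` with `R̄_j` invertible, the first `jL` columns `N` of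
`W_{j+1} Q̄ᴴ` form an orthonormal basis of `A 𝕂_j = range (W_{j+1} H̄_j)`, while `V₁` is one of
`range F₀`. The cosines of the principal angles are then the singular values of `V₁ᴴ N`, the
conjugate transpose of the top `jL × L` part `X` of the first block column of `Q̄`. That block
column is orthonormal, so `Xᴴ X = 1 - Pᴴ P` for its last block `P`, and unwinding the recursion
`Q̄_i = Q_i diag(Q̄_{i-1}, I_L)` gives `P = Q_j^{(21)} ⋯ Q_1^{(21)}`.
-/

open Polynomial in
lemma Matrix.IsHermitian.charpoly_one_sub {ι : Type*} [Fintype ι] [DecidableEq ι]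
    {A : Matrix ι ι ℂ} (hA : A.IsHermitian) :
    (1 - A).charpoly = ∏ i, (X - C ((1 - hA.eigenvalues i : ℝ) : ℂ)) := by
  conv_lhs => rw [hA.spectral_theorem, ← map_one (Unitary.conjStarAlgAut ℂ _ hA.eigenvectorUnitary),
    ← map_sub, Unitary.conjStarAlgAut_apply, charpoly_mul_comm, ← Matrix.mul_assoc,
    Unitary.coe_star_mul_self, Matrix.one_mul, ← diagonal_one, diagonal_sub, charpoly_diagonal]
  simp

open Polynomial in
lemma Matrix.IsHermitian.map_eigenvalues_one_sub {ι : Type*} [Fintype ι] [DecidableEq ι]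
    {A : Matrix ι ι ℂ} (hA : A.IsHermitian) (hB : (1 - A).IsHermitian) :
    Finset.univ.val.map hB.eigenvalues = Finset.univ.val.map (fun i => 1 - hA.eigenvalues i) := by
  apply Multiset.map_injective Complex.ofReal_injective
  rw [Multiset.map_map, ← RCLike.ofReal_eq_complex_ofReal, ← hB.roots_charpoly_eq_eigenvalues,
    hA.charpoly_one_sub, roots_prod _ _ (Finset.prod_ne_zero_iff.mpr fun i _ => X_sub_C_ne_zero _)]
  simp only [roots_X_sub_C, Multiset.bind_singleton, Multiset.map_map]
  rfl

lemma map_sqrt_one_sub_sq_eigenvalues_eq_svalsMultiset {ι κ : Type*} [Fintype ι] [DecidableEq ι]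
    [Fintype κ] (K : Matrix ι κ ℂ) (P : Matrix ι ι ℂ)
    (h : (K * Kᴴ).charpoly = (1 - Pᴴ * P).charpoly) :
    Finset.univ.val.map (fun i =>
        √(1 - √((isHermitian_mul_conjTranspose_self K).eigenvalues i) ^ 2)) =
      svalsMultiset P := by
  have hPP := isHermitian_conjTranspose_mul_self P
  have hsub : (1 - Pᴴ * P).IsHermitian := isHermitian_one.sub hPP
  have hcos : (isHermitian_mul_conjTranspose_self K).eigenvalues = hsub.eigenvalues :=
    (Matrix.IsHermitian.eigenvalues_eq_eigenvalues_iff _ _).mpr h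
  have hsin : hPP.eigenvalues = (isHermitian_mul_conjTranspose_self P).eigenvalues :=
    (Matrix.IsHermitian.eigenvalues_eq_eigenvalues_iff _ _).mpr (charpoly_mul_comm _ _)
  have hnonneg := open ComplexOrder in (posSemidef_self_mul_conjTranspose K).eigenvalues_nonneg
  calc Finset.univ.val.map (fun i =>
        √(1 - √((isHermitian_mul_conjTranspose_self K).eigenvalues i) ^ 2))
      = (Finset.univ.val.map hsub.eigenvalues).map (fun t => √(1 - t)) := by
        rw [Multiset.map_map, ← hcos]
        exact Multiset.map_congr rfl fun i _ => by simp [Real.sq_sqrt (hnonneg i)]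
    _ = svalsMultiset P := by
        rw [hPP.map_eigenvalues_one_sub hsub, svalsMultiset, Multiset.map_map, ← hsin]
        simp

section ColSpace

variable {n : ℕ} {κ μ : Type*} [Fintype κ] [Fintype μ]

lemma colSpace_eq_range_mulVecLin (M : Matrix (Fin n) κ ℂ) :
    colSpace M = LinearMap.range M.mulVecLin :=
  (range_mulVecLin M).symm

lemma colSpace_mul (A : Matrix (Fin n) (Fin n) ℂ) (B : Matrix (Fin n) κ ℂ) :
    colSpace (A * B) = (colSpace B).map A.mulVecLin := by
  simp only [colSpace_eq_range_mulVecLin, mulVecLin_mul, LinearMap.range_comp]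

lemma colSpace_mul_of_isUnit [DecidableEq κ] (A : Matrix (Fin n) κ ℂ) {K : Matrix κ κ ℂ}
    (hK : IsUnit K) : colSpace (A * K) = colSpace A := by
  have hsurj : LinearMap.range K.mulVecLin = ⊤ :=
    LinearMap.range_eq_top.mpr fun v => ⟨K⁻¹ *ᵥ v, by
      simp [mulVec_mulVec, mul_nonsing_inv _ ((isUnit_iff_isUnit_det K).mp hK)]⟩
  rw [colSpace_eq_range_mulVecLin, colSpace_eq_range_mulVecLin, mulVecLin_mul,
    LinearMap.range_comp_of_range_eq_top _ hsurj]

lemma mul_conjTranspose_mul_of_colSpace_le [DecidableEq μ] {P : Matrix (Fin n) κ ℂ}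
    {Q : Matrix (Fin n) μ ℂ} (hQ : Qᴴ * Q = 1) (h : colSpace P ≤ colSpace Q) :
    Q * (Qᴴ * P) = P := by
  refine ext_iff_mulVec.mpr fun x => ?_
  obtain ⟨w, hw⟩ : P *ᵥ x ∈ LinearMap.range Q.mulVecLin := by
    rw [← colSpace_eq_range_mulVecLin]
    exact h (by rw [colSpace_eq_range_mulVecLin]; exact ⟨x, rfl⟩)
  rw [mulVecLin_apply] at hw
  rw [← mulVec_mulVec, ← mulVec_mulVec, ← hw, mulVec_mulVec w, hQ, one_mulVec]

lemma mul_conjTranspose_eq_of_colSpace_eq [DecidableEq κ] {P Q : Matrix (Fin n) κ ℂ}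
    (hP : Pᴴ * P = 1) (hQ : Qᴴ * Q = 1) (h : colSpace P = colSpace Q) :
    P * Pᴴ = Q * Qᴴ := by
  have hPQ := mul_conjTranspose_mul_of_colSpace_le hQ h.le
  have hQP := mul_conjTranspose_mul_of_colSpace_le hP h.ge
  simp only [← Matrix.mul_assoc] at hPQ hQP
  calc P * Pᴴ = (Q * Qᴴ * (P * Pᴴ))ᴴ := by
        rw [← Matrix.mul_assoc, hPQ, conjTranspose_mul, conjTranspose_conjTranspose]
    _ = P * Pᴴ * (Q * Qᴴ) := by simp [Matrix.mul_assoc]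
    _ = Q * Qᴴ := by rw [← Matrix.mul_assoc, hQP]

lemma charpoly_mul_conjTranspose_eq_of_colSpace_eq {ι : Type*} [Fintype ι] [DecidableEq ι]
    [DecidableEq κ] {U V : Matrix (Fin n) ι ℂ} {M N : Matrix (Fin n) κ ℂ}
    (hU : Uᴴ * U = 1) (hV : Vᴴ * V = 1) (hM : Mᴴ * M = 1) (hN : Nᴴ * N = 1)
    (hUV : colSpace U = colSpace V) (hMN : colSpace M = colSpace N) :
    ((Uᴴ * M) * (Uᴴ * M)ᴴ).charpoly = ((Vᴴ * N) * (Vᴴ * N)ᴴ).charpoly := by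
  obtain ⟨T, rfl, hT⟩ : ∃ T, V * T = U ∧ T * Tᴴ = 1 := by
    have hVU := mul_conjTranspose_mul_of_colSpace_le hV hUV.le
    refine ⟨Vᴴ * U, hVU, mul_eq_one_comm.mp ?_⟩
    rw [conjTranspose_mul, conjTranspose_conjTranspose, Matrix.mul_assoc, hVU, hU]
  have hproj := mul_conjTranspose_eq_of_colSpace_eq hM hN hMN
  calc ((V * T)ᴴ * M * ((V * T)ᴴ * M)ᴴ).charpoly
      = (Tᴴ * ((Vᴴ * N) * (Vᴴ * N)ᴴ * T)).charpoly := by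
        simp only [conjTranspose_mul, conjTranspose_conjTranspose, Matrix.mul_assoc]
        rw [← Matrix.mul_assoc M, hproj]
        simp only [Matrix.mul_assoc]
    _ = ((Vᴴ * N) * (Vᴴ * N)ᴴ).charpoly := by
        rw [charpoly_mul_comm, Matrix.mul_assoc, hT, Matrix.mul_one]

end ColSpace

def blockEquiv (m L : ℕ) : (Fin m × Fin L) ⊕ Fin L ≃ Fin (m+1) × Fin L where
  toFun := Sum.elim (Prod.map Fin.castSucc id) (Fin.last m, ·)
  invFun r := if h : (r.1 : ℕ) < m then Sum.inl (⟨r.1, h⟩, r.2) else Sum.inr r.2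
  left_inv x := by rcases x with ⟨i, l⟩ | l <;> simp
  right_inv := by
    rintro ⟨r, l⟩
    by_cases h : (r : ℕ) < m
    · simp [h]
    · simp [h, Fin.ext_iff, Fin.val_last]; omega

lemma extendOne_eq_reindex_fromBlocks {m L : ℕ} (Q : Matrix (Fin m × Fin L) (Fin m × Fin L) ℂ) :
    extendOne Q = reindex (blockEquiv m L) (blockEquiv m L) (fromBlocks Q 0 0 1) := by
  ext ⟨r, a⟩ ⟨c, b⟩
  by_cases hr : (r : ℕ) < m <;> by_cases hc : (c : ℕ) < m <;>
    simp [extendOne, blockEquiv, hr, hc, one_apply]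

lemma extendOne_conjTranspose_mul_self {m L : ℕ} (Q : Matrix (Fin m × Fin L) (Fin m × Fin L) ℂ) :
    (extendOne Q)ᴴ * extendOne Q = extendOne (Qᴴ * Q) := by
  simp only [extendOne_eq_reindex_fromBlocks, reindex_apply, conjTranspose_submatrix,
    submatrix_mul_equiv, fromBlocks_conjTranspose, fromBlocks_multiply]
  simp

lemma extendOne_one {m L : ℕ} : extendOne (1 : Matrix (Fin m × Fin L) (Fin m × Fin L) ℂ) = 1 := by
  simp [extendOne_eq_reindex_fromBlocks]

@[simp]
lemma extendOne_apply_castSucc {m L : ℕ} (Q : Matrix (Fin m × Fin L) (Fin m × Fin L) ℂ)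
    (r c : Fin m) (a b : Fin L) :
    extendOne Q (r.castSucc, a) (c.castSucc, b) = Q (r, a) (c, b) := by
  simp [extendOne]

@[simp]
lemma extendOne_apply_last_castSucc {m L : ℕ} (Q : Matrix (Fin m × Fin L) (Fin m × Fin L) ℂ)
    (c : Fin m) (a b : Fin L) : extendOne Q (Fin.last m, a) (c.castSucc, b) = 0 := by
  simp [extendOne]

lemma trailingTwo_mul_apply_last {m L : ℕ} {κ : Type*} (Q11 Q12 Q21 Q22 : Matrix (Fin L) (Fin L) ℂ)
    (Y : Matrix (Fin (m+2) × Fin L) κ ℂ) (a : Fin L) (c : κ) :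
    (trailingTwo (m := m) Q11 Q12 Q21 Q22 * Y) (Fin.last (m+1), a) c =
      (Q21 * Y.submatrix (fun s => ((Fin.last m).castSucc, s)) id +
        Q22 * Y.submatrix (fun s => (Fin.last (m+1), s)) id) a c := by
  have hsmall (k : Fin m) : Fin.last (m+1) ≠ k.castSucc.castSucc :=
    ((Fin.castSucc_lt_castSucc_iff.mpr (Fin.castSucc_lt_last k)).trans (Fin.castSucc_lt_last _)).ne'
  simp [mul_apply, Fintype.sum_prod_type, Fin.sum_univ_castSucc, trailingTwo, hsmall]

section QbarFam

variable {L : ℕ} (Q11f Q12f Q21f Q22f : ℕ → Matrix (Fin L) (Fin L) ℂ)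

lemma QbarFam_conjTranspose_mul_self {k : ℕ}
    (h : ∀ i < k, (trailingTwo (m := i) (Q11f (i+1)) (Q12f (i+1)) (Q21f (i+1)) (Q22f (i+1)))ᴴ *
      trailingTwo (m := i) (Q11f (i+1)) (Q12f (i+1)) (Q21f (i+1)) (Q22f (i+1)) = 1) :
    (QbarFam Q11f Q12f Q21f Q22f k)ᴴ * QbarFam Q11f Q12f Q21f Q22f k = 1 := by
  induction k with
  | zero => simp [QbarFam]
  | succ k ih =>
    rw [QbarFam, conjTranspose_mul, Matrix.mul_assoc, ← Matrix.mul_assoc (trailingTwo _ _ _ _)ᴴ,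
      h k k.lt_succ_self, Matrix.one_mul, extendOne_conjTranspose_mul_self,
      ih fun i hi => h i (hi.trans k.lt_succ_self), extendOne_one]

lemma QbarFam_submatrix_last_zero (k : ℕ) :
    (QbarFam Q11f Q12f Q21f Q22f k).submatrix (Fin.last k, ·) ((0 : Fin (k+1)), ·) =
      prodFam Q21f k := by
  induction k with
  | zero => ext a b; simp [QbarFam, prodFam, one_apply]
  | succ k ih =>
    ext a b
    have h0 : ((0 : Fin (k+2)), b) = ((0 : Fin (k+1)).castSucc, b) := rfl
    rw [submatrix_apply, QbarFam, trailingTwo_mul_apply_last, h0]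
    simp only [Matrix.add_apply, mul_apply, submatrix_apply, id, extendOne_apply_castSucc,
      extendOne_apply_last_castSucc, mul_zero, Finset.sum_const_zero, add_zero, prodFam, ← ih]

end QbarFam

section Blocks

variable {m L : ℕ} {ι κ : Type*}

lemma submatrix_conjTranspose_mul_submatrix [Fintype ι] {μ ν ρ : Type*} (A : Matrix ι κ ℂ)
    (B : Matrix ι μ ℂ) (e : ν → κ) (f : ρ → μ) :
    (A.submatrix id e)ᴴ * B.submatrix id f = (Aᴴ * B).submatrix e f := by
  rw [conjTranspose_submatrix, ← submatrix_mul _ _ _ _ _ Function.bijective_id]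

lemma mul_eq_submatrix_mul_submatrix_of_last_eq_zero (Y : Matrix ι (Fin (m+1) × Fin L) ℂ)
    (Z : Matrix (Fin (m+1) × Fin L) κ ℂ) (hZ : ∀ a c, Z (Fin.last m, a) c = 0) :
    Y * Z =
      Y.submatrix id (Prod.map Fin.castSucc id) * Z.submatrix (Prod.map Fin.castSucc id) id := by
  ext r c
  simp [mul_apply, Fintype.sum_prod_type, Fin.sum_univ_castSucc, hZ]

lemma conjTranspose_mul_self_eq_add_last (Y : Matrix (Fin (m+1) × Fin L) κ ℂ) :
    Yᴴ * Y =
      (Y.submatrix (Prod.map Fin.castSucc id) id)ᴴ * Y.submatrix (Prod.map Fin.castSucc id) id +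
      (Y.submatrix (Fin.last m, ·) id)ᴴ * Y.submatrix (Fin.last m, ·) id := by
  ext r c
  simp [mul_apply, Fintype.sum_prod_type, Fin.sum_univ_castSucc]

lemma submatrix_conjTranspose_mul_self_of_injective [Fintype ι] [DecidableEq κ] {ν : Type*}
    [DecidableEq ν] {Y : Matrix ι κ ℂ} (hY : Yᴴ * Y = 1) {e : ν → κ} (he : Function.Injective e) :
    (Y.submatrix id e)ᴴ * Y.submatrix id e = 1 := by
  rw [submatrix_conjTranspose_mul_submatrix, hY, submatrix_one _ he]

end Blocks

lemma colSpace_mul_eq_of_qr {n m L : ℕ} (W : Matrix (Fin n) (Fin (m+1) × Fin L) ℂ)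
    {Q : Matrix (Fin (m+1) × Fin L) (Fin (m+1) × Fin L) ℂ}
    {H : Matrix (Fin (m+1) × Fin L) (Fin m × Fin L) ℂ} (hQ : Qᴴ * Q = 1)
    (hzero : ∀ a c, (Q * H) (Fin.last m, a) c = 0)
    (hR : IsUnit ((Q * H).submatrix (Prod.map Fin.castSucc id) id)) :
    colSpace (W * H) = colSpace ((W * Qᴴ).submatrix id (Prod.map Fin.castSucc id)) := by
  have hWH : W * H = W * Qᴴ * (Q * H) := by
    rw [Matrix.mul_assoc, ← Matrix.mul_assoc Qᴴ, hQ, Matrix.one_mul]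
  rw [hWH, mul_eq_submatrix_mul_submatrix_of_last_eq_zero _ _ hzero, colSpace_mul_of_isUnit _ hR]

namespace BlockArnoldi

variable {n L p : ℕ} (D : BlockArnoldi n L p)

lemma blockKrylov_eq_colSpace_Wfull :
    blockKrylov D.A (D.B - D.A * D.X0) (p+1) = colSpace D.Wfull := by
  rw [D.span (p+1) (by omega), colSpace]
  congr 1
  ext v
  constructor
  · rintro ⟨c, hc, rfl⟩
    exact ⟨(⟨c.1, hc⟩, c.2), rfl⟩
  · rintro ⟨⟨i, l⟩, rfl⟩
    exact ⟨(i.castSucc, l), i.isLt, rfl⟩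

lemma map_blockKrylov_eq_colSpace :
    (blockKrylov D.A (D.B - D.A * D.X0) (p+1)).map D.A.mulVecLin = colSpace (D.W * D.Hbar) := by
  rw [← D.arnoldi, colSpace_mul, D.blockKrylov_eq_colSpace_Wfull, Wfull]

lemma colSpace_F0_eq_colSpace_firstBlock :
    colSpace (D.B - D.A * D.X0) = colSpace (D.W.submatrix id ((0 : Fin (p+2)), ·)) := by
  rw [D.F0_eq, colSpace_mul_of_isUnit _ D.S0_inv]

end BlockArnoldi

theorem stmt18_general {n L p : ℕ} (D : BlockArnoldi n L p)
    (Q11f Q12f Q21f Q22f : ℕ → Matrix (Fin L) (Fin L) ℂ)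
    (hQ_unit : ∀ i : Fin (p+1),
      (trailingTwo (m := (i : ℕ)) (Q11f ((i : ℕ)+1)) (Q12f ((i : ℕ)+1))
          (Q21f ((i : ℕ)+1)) (Q22f ((i : ℕ)+1)))ᴴ *
        trailingTwo (m := (i : ℕ)) (Q11f ((i : ℕ)+1)) (Q12f ((i : ℕ)+1))
          (Q21f ((i : ℕ)+1)) (Q22f ((i : ℕ)+1)) = 1)
    (hQR_zero : ∀ i : Fin (p+1), ∀ (a : Fin L) c,
      (QbarFam Q11f Q12f Q21f Q22f ((i : ℕ)+1) *
        D.Hlead ((i : ℕ)+1) (Nat.succ_le_of_lt i.isLt)) (Fin.last ((i : ℕ)+1), a) c = 0)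
    (hQR_inv : ∀ i : Fin (p+1),
      IsUnit ((QbarFam Q11f Q12f Q21f Q22f ((i : ℕ)+1) *
        D.Hlead ((i : ℕ)+1) (Nat.succ_le_of_lt i.isLt)).submatrix
          (Prod.map Fin.castSucc id) id))
    (U : Matrix (Fin n) (Fin L) ℂ) (hU_orth : Uᴴ * U = 1)
    (hU_span : colSpace U = colSpace (D.B - D.A * D.X0))
    (M : Matrix (Fin n) (Fin (p+1) × Fin L) ℂ) (hM_orth : Mᴴ * M = 1)
    (hM_span : colSpace M =
      Submodule.map (D.A).mulVecLin (blockKrylov D.A (D.B - D.A * D.X0) (p+1))) :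
    (Finset.univ.val : Multiset (Fin L)).map
        (fun i => Real.sqrt (1 -
          Real.sqrt ((Matrix.isHermitian_mul_conjTranspose_self (Uᴴ * M)).eigenvalues i) ^ 2))
      = svalsMultiset (prodFam Q21f (p+1)) := by
  set Q := QbarFam Q11f Q12f Q21f Q22f (p+1)
  have hQ : Qᴴ * Q = 1 := QbarFam_conjTranspose_mul_self _ _ _ _ fun i hi => hQ_unit ⟨i, hi⟩
  have hWQ : (D.W * Qᴴ)ᴴ * (D.W * Qᴴ) = 1 := by
    rw [conjTranspose_mul, conjTranspose_conjTranspose, Matrix.mul_assoc, ← Matrix.mul_assoc D.Wᴴ,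
      D.orth, Matrix.one_mul, mul_eq_one_comm.mp hQ]
  have hcs : Function.Injective (Prod.map (Fin.castSucc : Fin (p+1) → _) (id : Fin L → _)) :=
    (Fin.castSucc_injective _).prodMap Function.injective_id
  have hcos := charpoly_mul_conjTranspose_eq_of_colSpace_eq hU_orth
    (submatrix_conjTranspose_mul_self_of_injective D.orth (Prod.mk_right_injective 0)) hM_orth
    (submatrix_conjTranspose_mul_self_of_injective hWQ hcs)
    (hU_span.trans D.colSpace_F0_eq_colSpace_firstBlock)
    (hM_span.trans <| D.map_blockKrylov_eq_colSpace.trans <|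
      colSpace_mul_eq_of_qr D.W hQ (hQR_zero (Fin.last p)) (hQR_inv (Fin.last p)))
  have hsin := conjTranspose_mul_self_eq_add_last (Q.submatrix id ((0 : Fin (p+2)), ·))
  simp only [submatrix_submatrix, Function.id_comp, Function.comp_id,
    submatrix_conjTranspose_mul_self_of_injective hQ (Prod.mk_right_injective 0)] at hsin
  rw [QbarFam_submatrix_last_zero, ← sub_eq_iff_eq_add] at hsin
  have hC : (D.W.submatrix id ((0 : Fin (p+2)), ·))ᴴ *
      (D.W * Qᴴ).submatrix id (Prod.map Fin.castSucc id) =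
      (Q.submatrix (Prod.map Fin.castSucc id) ((0 : Fin (p+2)), ·))ᴴ := by
    rw [submatrix_conjTranspose_mul_submatrix, ← Matrix.mul_assoc, D.orth, Matrix.one_mul,
      conjTranspose_submatrix]
  refine map_sqrt_one_sub_sq_eigenvalues_eq_svalsMultiset _ _ (hcos.trans ?_)
  rw [hsin, hC, conjTranspose_conjTranspose]

/-- The sines of the principal angles between the column space of
`F₀` and `A 𝕂_j(A, F₀)` are the singular values of the product
`Q_j^(21) Q_{j-1}^(21) ⋯ Q_1^(21)`. -/
theorem stmt18 {n L p : ℕ} (D : BlockArnoldi n L p)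
    (Q11f Q12f Q21f Q22f : ℕ → Matrix (Fin L) (Fin L) ℂ)
    (hQ_unit : ∀ i : Fin (p+1),
      (trailingTwo (m := (i : ℕ)) (Q11f ((i : ℕ)+1)) (Q12f ((i : ℕ)+1))
          (Q21f ((i : ℕ)+1)) (Q22f ((i : ℕ)+1)))ᴴ *
        trailingTwo (m := (i : ℕ)) (Q11f ((i : ℕ)+1)) (Q12f ((i : ℕ)+1))
          (Q21f ((i : ℕ)+1)) (Q22f ((i : ℕ)+1)) = 1)
    (hQR_zero : ∀ i : Fin (p+1), ∀ (a : Fin L) c,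
      (QbarFam Q11f Q12f Q21f Q22f ((i : ℕ)+1) *
        D.Hlead ((i : ℕ)+1) (Nat.succ_le_of_lt i.isLt)) (Fin.last ((i : ℕ)+1), a) c = 0)
    (hQR_ut : ∀ i : Fin (p+1),
      utBig ((QbarFam Q11f Q12f Q21f Q22f ((i : ℕ)+1) *
        D.Hlead ((i : ℕ)+1) (Nat.succ_le_of_lt i.isLt)).submatrix
          (Prod.map Fin.castSucc id) id))
    (hQR_inv : ∀ i : Fin (p+1),
      IsUnit ((QbarFam Q11f Q12f Q21f Q22f ((i : ℕ)+1) *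
        D.Hlead ((i : ℕ)+1) (Nat.succ_le_of_lt i.isLt)).submatrix
          (Prod.map Fin.castSucc id) id))
    (U : Matrix (Fin n) (Fin L) ℂ) (hU_orth : Uᴴ * U = 1)
    (hU_span : colSpace U = colSpace (D.B - D.A * D.X0))
    (M : Matrix (Fin n) (Fin (p+1) × Fin L) ℂ) (hM_orth : Mᴴ * M = 1)
    (hM_span : colSpace M =
      Submodule.map (D.A).mulVecLin (blockKrylov D.A (D.B - D.A * D.X0) (p+1))) :
    (Finset.univ.val : Multiset (Fin L)).map
        (fun i => Real.sqrt (1 -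
          Real.sqrt ((Matrix.isHermitian_mul_conjTranspose_self (Uᴴ * M)).eigenvalues i) ^ 2))
      = svalsMultiset (prodFam Q21f (p+1)) :=
  stmt18_general D Q11f Q12f Q21f Q22f hQ_unit hQR_zero hQR_inv U hU_orth hU_span M hM_orth hM_span

end
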